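/- arXiv:1210.5825 — 2 statements merged into one kernel-verified Lean document; each statement's English description precedes it below -/
import Mathlib

section
/- Let A be a Poisson algebra and I ⊆ A an ideal (not necessarily Poisson). The Poisson core P(I), defined as the sum of all Poisson ideals of A contained in I, is itself a Poisson ideal contained in I, and it is the largest such. Moreover, if I is a prime ideal, then P(I) is a Poisson prime ideal (prime and stable under the bracket), provided A is Noetherian over a field of characteristic 0. -/
/-!
The sum of Poisson ideals is Poisson because each `{a, -}` is additive, so `P(I)` is the largest
Poisson ideal inside `I`. For `I` prime, each `{a, -}` is a derivation, and in characteristic zero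
the radical of an ideal stable under a derivation `D` is again stable: from `x ^ n ∈ K` one
descends to `x ^ (n - j) * (D x) ^ (2 * j) ∈ K`, dividing by `n - j` at each step. Hence `P(I)`
is radical, since its radical is a Poisson ideal inside `I`. A minimal prime `Q ⊆ I` over the
radical ideal `P(I)` is then also Poisson: every `x ∈ Q` has some `s ∉ Q` with `s * x ∈ P(I)`,
and applying `D` shows `s * D x ∈ Q`. So `Q ⊆ P(I) ⊆ Q`, and `P(I) = Q` is prime.
-/

lemma Ideal.exists_notMem_mul_mem_of_mem_minimalPrimes {A : Type*} [CommRing A] {K Q : Ideal A}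
    (hK : K.IsRadical) (hQ : Q ∈ K.minimalPrimes) {x : A} (hx : x ∈ Q) :
    ∃ s ∉ Q, s * x ∈ K := by
  have : Q.IsPrime := hQ.1.1
  have hloc := IsLocalization.AtPrime.radical_map_of_mem_minimalPrimes
    (Localization.AtPrime Q) Q K hQ
  obtain ⟨n, hn⟩ : algebraMap A _ x ∈ (K.map (algebraMap A (Localization.AtPrime Q))).radical :=
    hloc ▸ Ideal.mem_map_of_mem _ hx
  rw [← map_pow, IsLocalization.algebraMap_mem_map_algebraMap_iff Q.primeCompl] at hn
  obtain ⟨s, hs, hsx⟩ := hn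
  refine ⟨s, hs, hK ⟨n + 1, ?_⟩⟩
  rw [show (s * x) ^ (n + 1) = s ^ n * x * (s * x ^ n) by ring]
  exact K.mul_mem_left _ hsx

lemma Ideal.nsmul_mem_iff {A : Type*} (k : Type*) [Field k] [CharZero k] [CommRing A]
    [Algebra k A] (K : Ideal A) {n : ℕ} (hn : n ≠ 0) {y : A} : n • y ∈ K ↔ y ∈ K := by
  have hunit : IsUnit (n : A) := by
    simpa using (Nat.cast_ne_zero.mpr hn : (n : k) ≠ 0).isUnit.map (algebraMap k A)
  rw [nsmul_eq_mul, K.unit_mul_mem_iff_mem hunit]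

namespace Derivation

lemma map_mem_of_mem_minimalPrimes {k A : Type*} [CommRing k] [CommRing A] [Algebra k A]
    (D : Derivation k A A) {K Q : Ideal A} (hK : ∀ y ∈ K, D y ∈ K) (hrad : K.IsRadical)
    (hQ : Q ∈ K.minimalPrimes) {x : A} (hx : x ∈ Q) : D x ∈ Q := by
  have hQprime : Q.IsPrime := hQ.1.1
  obtain ⟨s, hs, hsx⟩ := Ideal.exists_notMem_mul_mem_of_mem_minimalPrimes hrad hQ hx
  have hD : s * D x + x * D s ∈ Q := by
    simpa only [D.leibniz, smul_eq_mul] using hQ.1.2 (hK _ hsx)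
  have hsDx : s * D x ∈ Q := by
    simpa using Q.sub_mem hD (Q.mul_mem_right (D s) hx)
  exact (hQprime.mem_or_mem hsDx).resolve_left hs

variable {k A : Type*} [Field k] [CharZero k] [CommRing A] [Algebra k A]
  (D : Derivation k A A) {K : Ideal A}

lemma pow_mul_pow_add_two_mem (hK : ∀ y ∈ K, D y ∈ K) {x : A} {i n : ℕ}
    (h : x ^ (i + 1) * D x ^ n ∈ K) : x ^ i * D x ^ (n + 2) ∈ K := by
  have key : (i + 1) • (x ^ i * D x ^ (n + 2))
      = D x * D (x ^ (i + 1) * D x ^ n) - n • (x ^ (i + 1) * D x ^ n) * D (D x) := by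
    rw [D.leibniz, D.leibniz_pow, D.leibniz_pow]
    rcases n with _ | n <;> simp only [smul_eq_mul] <;> push_cast <;> ring
  rw [← K.nsmul_mem_iff k i.succ_ne_zero, key]
  exact K.sub_mem (K.mul_mem_left _ (hK _ h)) (K.mul_mem_right _ (K.smul_of_tower_mem n h))

lemma map_mem_radical (hK : ∀ y ∈ K, D y ∈ K) {x : A} (hx : x ∈ K.radical) :
    D x ∈ K.radical := by
  obtain ⟨n, hn⟩ := hx
  have descent : ∀ j ≤ n, x ^ (n - j) * D x ^ (2 * j) ∈ K := by
    intro j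
    induction j with
    | zero => simpa using hn
    | succ j ih =>
      intro hj
      have h := ih (by omega)
      rw [show n - j = n - (j + 1) + 1 by omega] at h
      exact D.pow_mul_pow_add_two_mem hK h
  exact ⟨2 * n, by simpa using descent n le_rfl⟩

end Derivation

section Poisson

variable {k A : Type*} [CommRing k] [CommRing A] [Algebra k A] (bracket : A →ₗ[k] A →ₗ[k] A)

def IsPoissonIdeal (J : Ideal A) : Prop :=
  ∀ a : A, ∀ x ∈ J, bracket a x ∈ J

def poissonCore (I : Ideal A) : Ideal A :=
  sSup {J : Ideal A | IsPoissonIdeal bracket J ∧ J ≤ I}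

lemma isPoissonIdeal_sSup {S : Set (Ideal A)} (hS : ∀ J ∈ S, IsPoissonIdeal bracket J) :
    IsPoissonIdeal bracket (sSup S) := by
  intro a x hx
  rw [sSup_eq_iSup'] at hx ⊢
  refine Submodule.iSup_induction _ (motive := fun y => bracket a y ∈ _) hx ?_ ?_ ?_
  · exact fun J y hy => Submodule.mem_iSup_of_mem J (hS J J.2 a y hy)
  · simp
  · exact fun y z hy hz => by simpa using add_mem hy hz

lemma isPoissonIdeal_poissonCore (I : Ideal A) :
    IsPoissonIdeal bracket (poissonCore bracket I) :=
  isPoissonIdeal_sSup bracket fun _ hJ => hJ.1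

lemma poissonCore_le (I : Ideal A) : poissonCore bracket I ≤ I :=
  sSup_le fun _ hJ => hJ.2

lemma le_poissonCore {I J : Ideal A} (hJ : IsPoissonIdeal bracket J) (hJI : J ≤ I) :
    J ≤ poissonCore bracket I :=
  le_sSup ⟨hJ, hJI⟩

variable {bracket}
variable (leibniz : ∀ a b c : A, bracket a (b * c) = bracket a b * c + b * bracket a c)
include leibniz

def bracketDerivation (a : A) : Derivation k A A :=
  Derivation.mk' (bracket a) fun b c => by
    rw [leibniz, smul_eq_mul, smul_eq_mul, add_comm, mul_comm c]

lemma IsPoissonIdeal.of_mem_minimalPrimes {K Q : Ideal A} (hK : IsPoissonIdeal bracket K)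
    (hrad : K.IsRadical) (hQ : Q ∈ K.minimalPrimes) : IsPoissonIdeal bracket Q :=
  fun a _ hx => (bracketDerivation leibniz a).map_mem_of_mem_minimalPrimes (hK a) hrad hQ hx

end Poisson

section CharZero

variable {k A : Type*} [Field k] [CharZero k] [CommRing A] [Algebra k A]
  {bracket : A →ₗ[k] A →ₗ[k] A}
  (leibniz : ∀ a b c : A, bracket a (b * c) = bracket a b * c + b * bracket a c)
include leibniz

lemma IsPoissonIdeal.radical {K : Ideal A} (hK : IsPoissonIdeal bracket K) :
    IsPoissonIdeal bracket K.radical := fun a _ hx =>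
  (bracketDerivation leibniz a).map_mem_radical (hK a) hx

lemma isRadical_poissonCore {I : Ideal A} (hI : I.IsRadical) :
    (poissonCore bracket I).IsRadical :=
  le_poissonCore bracket ((isPoissonIdeal_poissonCore bracket I).radical leibniz)
    ((Ideal.radical_mono (poissonCore_le bracket I)).trans hI)

theorem isPrime_poissonCore {I : Ideal A} (hI : I.IsPrime) :
    (poissonCore bracket I).IsPrime := by
  obtain ⟨Q, hQ, hQI⟩ := Ideal.exists_minimalPrimes_le (poissonCore_le bracket I)
  have hQP : Q ≤ poissonCore bracket I :=
    le_poissonCore bracket ((isPoissonIdeal_poissonCore bracket I).of_mem_minimalPrimes leibniz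
      (isRadical_poissonCore leibniz hI.isRadical) hQ) hQI
  rw [le_antisymm hQ.1.2 hQP]
  exact hQ.1.1

end CharZero

theorem stmt17_general (k A : Type) [Field k] [CharZero k] [CommRing A] [Algebra k A]
    (bracket : A →ₗ[k] A →ₗ[k] A)
    (leibniz : ∀ a b c, bracket a (b * c) = bracket a b * c + b * bracket a c)
    (I : Ideal A) :
    let P : Ideal A := sSup {J : Ideal A | (∀ a : A, ∀ x ∈ J, bracket a x ∈ J) ∧ J ≤ I}
    (∀ a : A, ∀ x ∈ P, bracket a x ∈ P) ∧ P ≤ I ∧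
      (∀ J : Ideal A, (∀ a : A, ∀ x ∈ J, bracket a x ∈ J) → J ≤ I → J ≤ P) ∧
      (I.IsPrime → P.IsPrime) :=
  ⟨isPoissonIdeal_poissonCore bracket I, poissonCore_le bracket I,
    fun _ => le_poissonCore bracket, isPrime_poissonCore leibniz⟩

/-- The Poisson core `P(I)` of an ideal `I` in a Poisson algebra — the sum of all Poisson
ideals contained in `I` — is a Poisson ideal contained in `I`, is the largest such, and if
`I` is prime (with `A` Noetherian over a field of characteristic zero) then `P(I)` is a
Poisson prime ideal. -/
theorem stmt17 (k A : Type) [Field k] [CharZero k] [CommRing A] [Algebra k A]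
    [IsNoetherianRing A]
    (bracket : A →ₗ[k] A →ₗ[k] A)
    (skew : ∀ a b, bracket a b = - bracket b a)
    (jacobi : ∀ a b c,
      bracket a (bracket b c) + bracket c (bracket a b) + bracket b (bracket c a) = 0)
    (leibniz : ∀ a b c, bracket a (b * c) = bracket a b * c + b * bracket a c)
    (I : Ideal A) :
    let P : Ideal A := sSup {J : Ideal A | (∀ a : A, ∀ x ∈ J, bracket a x ∈ J) ∧ J ≤ I}
    (∀ a : A, ∀ x ∈ P, bracket a x ∈ P) ∧ P ≤ I ∧
      (∀ J : Ideal A, (∀ a : A, ∀ x ∈ J, bracket a x ∈ J) → J ≤ I → J ≤ P) ∧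
      (I.IsPrime → P.IsPrime) :=
  stmt17_general k A bracket leibniz I
end

section
/- Let Λ be a skew-symmetric n×n integer matrix with kernel spanned by c₁,...,c_t ∈ ℤⁿ (a ℤ-basis of ker Λ ∩ ℤⁿ). In the Poisson torus (k[x₁^{±1},...,x_n^{±1}], Λ) over a field k of characteristic 0, every Poisson ideal is generated by its intersection with the Poisson center k[x^{±c₁},...,x^{±c_t}]. In particular, if Λ is nondegenerate (t = 0), the only Poisson ideals of the Poisson torus are 0 and the whole ring. -/
open Matrix

/-!
Conjugating the bracket by a monomial, `x^(-e) * {x^e, f}` multiplies the coefficient of `x^b`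
in `f` by the weight `eᵀΛb`, so a Poisson ideal `J` is stable under these diagonal operators.
Induct on the size of the support of `f ∈ J`; after multiplying by a monomial, `x^0` occurs
in `f`. If every exponent of `f` is central, `f` lies in the span of central monomials.
Otherwise some exponent `b` of `f` has a weight `w = eᵀΛb ≠ 0`; the diagonal operators with
weights `eᵀΛ(·)` and `eᵀΛ(·) - w` kill `x^0` and `x^b` respectively, so both images of `f`
lie in the ideal generated by the central part of `J`, and so does their difference `w • f`.
-/

namespace PoissonTorus

open AddMonoidAlgebra Finset

section ScaleCoeff

variable {k G : Type*} [CommSemiring k]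

noncomputable def scaleCoeff (φ : G → k) : AddMonoidAlgebra k G →ₗ[k] AddMonoidAlgebra k G where
  toFun f := ofCoeff (φ • f.coeff)
  map_add' f g := by ext; simp
  map_smul' r f := by ext; simp [mul_left_comm]

@[simp]
theorem coeff_scaleCoeff (φ : G → k) (f : AddMonoidAlgebra k G) (b : G) :
    (scaleCoeff φ f).coeff b = φ b * f.coeff b :=
  rfl

@[simp]
theorem scaleCoeff_single (φ : G → k) (b : G) (r : k) :
    scaleCoeff φ (single b r) = single b (φ b * r) := by
  ext c
  by_cases h : b = c <;> simp [h]

theorem support_scaleCoeff_subset_erase [DecidableEq G] {φ : G → k} {a : G} (ha : φ a = 0)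
    (f : AddMonoidAlgebra k G) : (scaleCoeff φ f).coeff.support ⊆ f.coeff.support.erase a := by
  intro b hb
  rw [Finsupp.mem_support_iff, coeff_scaleCoeff] at hb
  rw [Finset.mem_erase, Finsupp.mem_support_iff]
  exact ⟨by rintro rfl; simp [ha] at hb, right_ne_zero_of_mul hb⟩

end ScaleCoeff

theorem scaleCoeff_sub_const {k G : Type*} [CommRing k] (φ : G → k) (c : k)
    (f : AddMonoidAlgebra k G) : scaleCoeff (fun b => φ b - c) f = scaleCoeff φ f - c • f := by
  ext b; simp [sub_mul]

theorem eq_top_of_eq_span_inter_span_one {k A : Type*} [Field k] [Semiring A] [Algebra k A]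
    {J : Ideal A} (hJ : J = Ideal.span (↑J ∩ ↑(Submodule.span k {(1 : A)}))) (hne : J ≠ ⊥) :
    J = ⊤ := by
  obtain ⟨x, ⟨hxJ, hx1⟩, hx0⟩ : ∃ x ∈ (↑J ∩ ↑(Submodule.span k {(1 : A)}) : Set A), x ≠ 0 := by
    by_contra! h
    exact hne (hJ.trans (Ideal.span_eq_bot.2 h))
  obtain ⟨r, rfl⟩ := Submodule.mem_span_singleton.1 hx1
  have hr : r ≠ 0 := by rintro rfl; simp at hx0
  rw [Ideal.eq_top_iff_one]
  simpa [smul_smul, hr] using J.smul_of_tower_mem r⁻¹ hxJ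

section ZeroWeight

variable {k G ι : Type*} [Field k] [AddGroup G]

def zeroWeightMonomials (φ : ι → G → k) : Set (AddMonoidAlgebra k G) :=
  {g | ∃ c, (∀ i, φ i c = 0) ∧ g = single c 1}

variable {φ : ι → G → k} {J : Ideal (AddMonoidAlgebra k G)}

theorem mem_span_of_coeff_zero_ne_zero (hφ : ∀ i, φ i 0 = 0)
    (hJ : ∀ i, ∀ f ∈ J, scaleCoeff (φ i) f ∈ J) {f : AddMonoidAlgebra k G} (hf : f ∈ J)
    (h0 : f.coeff 0 ≠ 0)
    (ih : ∀ g ∈ J, #g.coeff.support < #f.coeff.support →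
      g ∈ Ideal.span (↑J ∩ ↑(Submodule.span k (zeroWeightMonomials φ)))) :
    f ∈ Ideal.span (↑J ∩ ↑(Submodule.span k (zeroWeightMonomials φ))) := by
  classical
  set S :=
    Ideal.span ((J : Set (AddMonoidAlgebra k G)) ∩ Submodule.span k (zeroWeightMonomials φ))
  by_cases hzero : ∀ b ∈ f.coeff.support, ∀ i, φ i b = 0
  · refine Ideal.subset_span ⟨hf, Submodule.span_mono ?_ (mem_span_support_coeff f)⟩
    rintro _ ⟨b, hb, rfl⟩
    exact ⟨b, hzero b hb, rfl⟩
  push Not at hzero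
  obtain ⟨b, hb, i, hi⟩ := hzero
  have mem_of_vanishing {a : G} (ha : a ∈ f.coeff.support) {ψ : G → k} (hψa : ψ a = 0)
      (hψ : scaleCoeff ψ f ∈ J) : scaleCoeff ψ f ∈ S :=
    ih _ hψ ((card_le_card (support_scaleCoeff_subset_erase hψa f)).trans_lt
      (card_erase_lt_of_mem ha))
  have h₀ := mem_of_vanishing (Finsupp.mem_support_iff.2 h0) (hφ i) (hJ i f hf)
  have hb' := mem_of_vanishing hb (ψ := fun x => φ i x - φ i b) (sub_self _)
    (by rw [scaleCoeff_sub_const]; exact sub_mem (hJ i f hf) (J.smul_of_tower_mem _ hf))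
  rw [scaleCoeff_sub_const] at hb'
  have hsmul : φ i b • f ∈ S := by simpa using sub_mem h₀ hb'
  simpa [smul_smul, hi] using S.smul_of_tower_mem (φ i b)⁻¹ hsmul

theorem mem_span_inter_span_zeroWeightMonomials (hφ : ∀ i, φ i 0 = 0)
    (hJ : ∀ i, ∀ f ∈ J, scaleCoeff (φ i) f ∈ J) {f : AddMonoidAlgebra k G} (hf : f ∈ J) :
    f ∈ Ideal.span (↑J ∩ ↑(Submodule.span k (zeroWeightMonomials φ))) := by
  induction hm : #f.coeff.support using Nat.strong_induction_on generalizing f with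
  | _ m ih =>
    obtain rfl | hf0 := eq_or_ne f 0
    · exact zero_mem _
    obtain ⟨a, ha⟩ := Finsupp.support_nonempty_iff.2 (coeff_eq_zero.not.2 hf0)
    have hshift : single (-a) 1 * f ∈
        Ideal.span (↑J ∩ ↑(Submodule.span k (zeroWeightMonomials φ))) := by
      refine mem_span_of_coeff_zero_ne_zero hφ hJ (J.mul_mem_left _ hf) (by simpa using ha)
        fun g hg hlt => ih _ ?_ hg rfl
      rwa [support_coeff_single_mul f 1 (by simp), card_map, hm] at hlt
    simpa [← mul_assoc, single_mul_single, ← one_def] using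
      Ideal.mul_mem_left _ (single a 1) hshift

end ZeroWeight

section Torus

variable {k : Type*} {n : ℕ}

theorem single_neg_mul_bracket_single [CommRing k] (Λ : Matrix (Fin n) (Fin n) ℤ)
    (bracket : AddMonoidAlgebra k (Fin n → ℤ) →ₗ[k]
      AddMonoidAlgebra k (Fin n → ℤ) →ₗ[k] AddMonoidAlgebra k (Fin n → ℤ))
    (hmono : ∀ a b : Fin n → ℤ,
      bracket (single a 1) (single b 1) = ((a ⬝ᵥ Λ *ᵥ b : ℤ) : k) • single (a + b) 1)
    (e : Fin n → ℤ) (f : AddMonoidAlgebra k (Fin n → ℤ)) :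
    single (-e) 1 * bracket (single e 1) f = scaleCoeff (fun b => ((e ⬝ᵥ Λ *ᵥ b : ℤ) : k)) f := by
  suffices (LinearMap.mulLeft k (single (-e) (1 : k))).comp (bracket (single e 1)) =
      scaleCoeff (fun b => ((e ⬝ᵥ Λ *ᵥ b : ℤ) : k)) from LinearMap.congr_fun this f
  ext b : 2
  simp [hmono]

theorem forall_intCast_dotProduct_eq_zero_iff [Field k] [CharZero k] (v : Fin n → ℤ) :
    (∀ e : Fin n → ℤ, ((e ⬝ᵥ v : ℤ) : k) = 0) ↔ v = 0 := by
  refine ⟨fun h => funext fun i => by simpa [single_dotProduct] using h (Pi.single i 1), ?_⟩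
  rintro rfl
  simp

theorem zeroWeightMonomials_dotProduct_mulVec [Field k] [CharZero k]
    (Λ : Matrix (Fin n) (Fin n) ℤ) :
    zeroWeightMonomials (fun (e b : Fin n → ℤ) => ((e ⬝ᵥ Λ *ᵥ b : ℤ) : k)) =
      {g | ∃ c : Fin n → ℤ, Λ *ᵥ c = 0 ∧ g = single c 1} := by
  simp only [zeroWeightMonomials, forall_intCast_dotProduct_eq_zero_iff]

theorem monomials_mulVec_eq_zero_of_injective [Field k] {Λ : Matrix (Fin n) (Fin n) ℤ}
    (hΛ : Function.Injective Λ.mulVec) :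
    {g : AddMonoidAlgebra k (Fin n → ℤ) | ∃ c, Λ *ᵥ c = 0 ∧ g = single c 1} = {1} := by
  ext g
  simp only [Set.mem_ofPred_eq, Set.mem_singleton_iff]
  refine ⟨?_, fun hg => ⟨0, mulVec_zero Λ, hg.trans one_def⟩⟩
  rintro ⟨c, hc, rfl⟩
  rw [hΛ (hc.trans (mulVec_zero Λ).symm), one_def]

end Torus

end PoissonTorus

open PoissonTorus

theorem stmt19_general (k : Type) [Field k] [CharZero k] (n : ℕ)
    (Λ : Matrix (Fin n) (Fin n) ℤ)
    (bracket : AddMonoidAlgebra k (Fin n → ℤ) →ₗ[k]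
      AddMonoidAlgebra k (Fin n → ℤ) →ₗ[k] AddMonoidAlgebra k (Fin n → ℤ))
    (hmono : ∀ a b : Fin n → ℤ,
      bracket (AddMonoidAlgebra.single a 1) (AddMonoidAlgebra.single b 1)
        = ((a ⬝ᵥ Λ.mulVec b : ℤ) : k) • AddMonoidAlgebra.single (a + b) 1)
    (J : Ideal (AddMonoidAlgebra k (Fin n → ℤ)))
    (hJ : ∀ a, ∀ x ∈ J, bracket a x ∈ J) :
    J = Ideal.span (↑J ∩
        ↑(Submodule.span k {g : AddMonoidAlgebra k (Fin n → ℤ) |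
            ∃ c : Fin n → ℤ, Λ.mulVec c = 0 ∧ g = AddMonoidAlgebra.single c 1})) ∧
    (Function.Injective (Λ.mulVec : (Fin n → ℤ) → (Fin n → ℤ)) → J ≠ ⊥ → J = ⊤) := by
  have hscale (e : Fin n → ℤ) (f) (hf : f ∈ J) :
      scaleCoeff (fun b => ((e ⬝ᵥ Λ *ᵥ b : ℤ) : k)) f ∈ J := by
    rw [← single_neg_mul_bracket_single Λ bracket hmono]
    exact J.mul_mem_left _ (hJ _ f hf)
  have hspan : J = Ideal.span (↑J ∩
      ↑(Submodule.span k {g : AddMonoidAlgebra k (Fin n → ℤ) |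
          ∃ c : Fin n → ℤ, Λ.mulVec c = 0 ∧ g = AddMonoidAlgebra.single c 1})) := by
    refine le_antisymm (fun f hf => ?_) (Ideal.span_le.2 Set.inter_subset_left)
    rw [← zeroWeightMonomials_dotProduct_mulVec]
    exact mem_span_inter_span_zeroWeightMonomials (by simp) hscale hf
  refine ⟨hspan, fun hΛ hne => ?_⟩
  rw [monomials_mulVec_eq_zero_of_injective hΛ] at hspan
  exact eq_top_of_eq_span_inter_span_one hspan hne

/-- In the Poisson torus defined by a skew-symmetric integer matrix `Λ`, every Poisson
ideal is generated by its intersection with the Poisson center (the span of the monomials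
`x^c` with `Λc = 0`). In particular, when `Λ` is nondegenerate the only Poisson ideals are
`0` and the whole ring. -/
theorem stmt19 (k : Type) [Field k] [CharZero k] (n : ℕ)
    (Λ : Matrix (Fin n) (Fin n) ℤ) (hskew : Λᵀ = -Λ)
    (bracket : AddMonoidAlgebra k (Fin n → ℤ) →ₗ[k]
      AddMonoidAlgebra k (Fin n → ℤ) →ₗ[k] AddMonoidAlgebra k (Fin n → ℤ))
    (hmono : ∀ a b : Fin n → ℤ,
      bracket (AddMonoidAlgebra.single a 1) (AddMonoidAlgebra.single b 1)
        = ((a ⬝ᵥ Λ.mulVec b : ℤ) : k) • AddMonoidAlgebra.single (a + b) 1)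
    (hleibniz : ∀ a b c, bracket a (b * c) = bracket a b * c + b * bracket a c)
    (J : Ideal (AddMonoidAlgebra k (Fin n → ℤ)))
    (hJ : ∀ a, ∀ x ∈ J, bracket a x ∈ J) :
    J = Ideal.span (↑J ∩
        ↑(Submodule.span k {g : AddMonoidAlgebra k (Fin n → ℤ) |
            ∃ c : Fin n → ℤ, Λ.mulVec c = 0 ∧ g = AddMonoidAlgebra.single c 1})) ∧
    (Function.Injective (Λ.mulVec : (Fin n → ℤ) → (Fin n → ℤ)) → J ≠ ⊥ → J = ⊤) :=
  stmt19_general k n Λ bracket hmono J hJ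
end
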